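/- (Composing characterization) Under the hypotheses of the composing/decomposing theorem, for a tuple (x_1,…,x_m) ∈ S with rule {x_j : j ∈ W_i} →_p x_i (all values in S_∞), the rule is composing with respect to the ordering ≺_p if and only if i ∈ C. -/

import Mathlib

/-! A value `x i` with `i ∈ C` first appears at a successor stage `n + 1`, and by local
collision freeness all of `x '' W i` then already lies in `S_n`: so the rule at `i ∈ C` is
composing. For `i ∈ D`, take `h ∈ C ∩ W i` with `i ∈ W h`; composing would force `x h ≺ x i`,
yet `x i ∈ x '' W h` lies in a stage strictly below the one at which `x h` first appears. -/

variable {V : Type*} {m : ℕ}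

def ImS (S : Set (Fin m → V)) (C : Set (Fin m)) : Set V :=
  {v | ∃ i ∈ C, ∃ x ∈ S, x i = v}

def Stage (S : Set (Fin m → V)) (C : Set (Fin m)) (W : Fin m → Set (Fin m)) :
    ℕ → Set V
  | 0 => (ImS S C)ᶜ
  | n + 1 => Stage S C W n ∪
      {v | ∃ i ∈ C, ∃ x ∈ S, x i = v ∧ ∀ j ∈ W i, x j ∈ Stage S C W n}

def SInf (S : Set (Fin m → V)) (C : Set (Fin m)) (W : Fin m → Set (Fin m)) : Set V :=
  ⋃ n, Stage S C W n

/-- The stage ordering: `v ≺ w` iff the first stage containing `v` strictly precedes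
the first stage containing `w`. -/
def precS (S : Set (Fin m → V)) (C : Set (Fin m)) (W : Fin m → Set (Fin m))
    (v w : V) : Prop :=
  ∃ a b : ℕ, a < b ∧
    v ∈ Stage S C W a ∧ (∀ k < a, v ∉ Stage S C W k) ∧
    w ∈ Stage S C W b ∧ (∀ k < b, w ∉ Stage S C W k)

section Stages

variable {S : Set (Fin m → V)} {C : Set (Fin m)} {W : Fin m → Set (Fin m)}

/-- `v ∈ S_n − S_{n-1}`. -/
def EntersAt (S : Set (Fin m → V)) (C : Set (Fin m)) (W : Fin m → Set (Fin m))
    (v : V) (n : ℕ) : Prop :=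
  v ∈ Stage S C W n ∧ ∀ k < n, v ∉ Stage S C W k

theorem precS_iff {v w : V} :
    precS S C W v w ↔ ∃ a b, a < b ∧ EntersAt S C W v a ∧ EntersAt S C W w b := by
  simp only [precS, EntersAt, and_assoc]

theorem exists_entersAt_le {v : V} {n : ℕ} (hv : v ∈ Stage S C W n) :
    ∃ a ≤ n, EntersAt S C W v a := by
  classical
  have hex : ∃ a, v ∈ Stage S C W a := ⟨n, hv⟩
  exact ⟨Nat.find hex, Nat.find_le hv, Nat.find_spec hex, fun _ => Nat.find_min hex⟩

theorem EntersAt.exists_eq_succ {i : Fin m} {x : Fin m → V} {n : ℕ} (hi : i ∈ C) (hx : x ∈ S)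
    (h : EntersAt S C W (x i) n) : ∃ k, n = k + 1 := by
  refine Nat.exists_eq_succ_of_ne_zero fun hn => ?_
  subst hn
  exact h.1 ⟨i, hi, x, hx, rfl⟩

/-- Local collision freeness makes `x '' W i` depend only on `x i`, so the tuple that brought
`x i` into `S_{n+1}` certifies `x '' W i ⊆ S_n`. -/
theorem EntersAt.apply_mem_stage
    (hcf : ∀ i ∈ C, ∀ t ∈ C, ∀ x ∈ S, ∀ y ∈ S, x i = y t → x '' (W i) = y '' (W t))
    {i j : Fin m} {x : Fin m → V} {n : ℕ} (hi : i ∈ C) (hx : x ∈ S)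
    (h : EntersAt S C W (x i) (n + 1)) (hj : j ∈ W i) : x j ∈ Stage S C W n := by
  rcases h.1 with hmem | ⟨t, ht, y, hy, hyt, hyW⟩
  · exact absurd hmem (h.2 n n.lt_succ_self)
  · obtain ⟨k, hk, hkj⟩ : x j ∈ y '' W t :=
      hcf i hi t ht x hx y hy hyt.symm ▸ Set.mem_image_of_mem x hj
    exact hkj ▸ hyW k hk

end Stages

theorem composing_characterization_general
    (S : Set (Fin m → V)) (C D : Set (Fin m)) (W : Fin m → Set (Fin m))
    (hLCF1 : ∀ i ∈ D, ∃ h ∈ C, h ∈ W i ∧ i ∈ W h)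
    (hLCF2 : ∀ i ∈ C, ∀ t ∈ C, ∀ x ∈ S, ∀ y ∈ S,
      x i = y t → x '' (W i) = y '' (W t))
    (i : Fin m) (hi : i ∈ C ∪ D) (x : Fin m → V) (hx : x ∈ S)
    (hxi : x i ∈ SInf S C W) :
    (∀ j ∈ W i, precS S C W (x j) (x i)) ↔ i ∈ C := by
  constructor
  · intro hcomp
    refine hi.resolve_right fun hiD => ?_
    obtain ⟨h, hhC, hhWi, hiWh⟩ := hLCF1 i hiD
    obtain ⟨a, b, hab, ha, hb⟩ := precS_iff.1 (hcomp h hhWi)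
    obtain ⟨n, rfl⟩ := ha.exists_eq_succ hhC hx
    exact hb.2 n (by omega) (ha.apply_mem_stage hLCF2 hhC hx hiWh)
  · intro hiC j hj
    obtain ⟨_, hxi⟩ := Set.mem_iUnion.1 hxi
    obtain ⟨b, -, hb⟩ := exists_entersAt_le hxi
    obtain ⟨n, rfl⟩ := hb.exists_eq_succ hiC hx
    obtain ⟨a, han, ha⟩ := exists_entersAt_le (hb.apply_mem_stage hLCF2 hiC hx hj)
    exact precS_iff.2 ⟨a, n + 1, by omega, ha, hb⟩

theorem composing_characterization
    (S : Set (Fin m → V)) (C D : Set (Fin m)) (W : Fin m → Set (Fin m))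
    (hLCF1 : ∀ i ∈ D, ∃ h ∈ C, h ∈ W i ∧ i ∈ W h)
    (hLCF2 : ∀ i ∈ C, ∀ t ∈ C, ∀ x ∈ S, ∀ y ∈ S,
      x i = y t → x '' (W i) = y '' (W t))
    (hCD : Disjoint C D)
    (i : Fin m) (hi : i ∈ C ∪ D) (x : Fin m → V) (hx : x ∈ S)
    (hxi : x i ∈ SInf S C W) (hW : ∀ j ∈ W i, x j ∈ SInf S C W) :
    (∀ j ∈ W i, precS S C W (x j) (x i)) ↔ i ∈ C :=
  composing_characterization_general S C D W hLCF1 hLCF2 i hi x hx hxi
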